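/- Let R be a Dedekind domain, 𝔭 a non-zero prime ideal of R, and T a 𝔭-primary torsion R-module that is not bounded (i.e. 𝔭ⁿ T ≠ 0 for every positive integer n). Then there exists a surjective R-module homomorphism from T onto a non-zero divisible R-module. -/

import Mathlib

/-!
Let `A = R_𝔭`, a discrete valuation ring with fraction field `K`, and `E = K/A`. Over the
Dedekind domain `R` the divisible module `E` is injective, and an element of `E` killed by `𝔭`
lets it separate the points of any `𝔭`-primary module. Because `T` is unbounded, a map to `E`
from a bounded submodule of `T` extends to a larger bounded submodule so that the image gains an
element not killed by `𝔭 ^ n`; the union of such a chain gives a map `T → E` with unbounded image.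
Since `A` is a valuation ring, an unbounded submodule of `E` is all of `E`.
-/

theorem Module.Baer.of_divisible_of_isDedekindDomain {R Q : Type*} [CommRing R]
    [IsDedekindDomain R] [AddCommGroup Q] [Module R Q]
    (hQ : ∀ r : R, r ≠ 0 → ∀ q : Q, ∃ q' : Q, r • q' = q) : Module.Baer R Q := by
  intro I g
  rcases eq_or_ne I ⊥ with rfl | hI
  · refine ⟨0, fun x hx => ?_⟩
    obtain rfl := (Submodule.mem_bot R).1 hx
    exact (map_zero g).symm
  obtain ⟨a, haI, ha0⟩ := Submodule.exists_mem_ne_zero_of_ne_bot hI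
  obtain ⟨J, hJ⟩ := Ideal.dvd_iff_le.2 ((Ideal.span_singleton_le_iff_mem I).2 haI)
  -- Writing `a = ∑ xᵢ yᵢ` with `xᵢ ∈ I`, `yᵢ ∈ J` and choosing `a • eᵢ = g xᵢ`, the extension is
  -- `r ↦ r • ∑ yᵢ eᵢ`; `key` builds this sum by induction on membership in `I * J`.
  have key : ∀ z ∈ I * J, ∃ e : Q, ∀ x : I, ∃ w : I,
      (x : R) * z = a * w ∧ (x : R) • e = g w := by
    intro z hz
    refine Submodule.mul_induction_on hz (fun x' hx' y hy => ?_) fun z₁ z₂ h₁ h₂ => ?_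
    · obtain ⟨e, he⟩ := hQ a ha0 (g ⟨x', hx'⟩)
      refine ⟨y • e, fun x => ?_⟩
      obtain ⟨m, hm⟩ := Ideal.mem_span_singleton'.1 (hJ ▸ Ideal.mul_mem_mul x.2 hy)
      refine ⟨m • ⟨x', hx'⟩, ?_, ?_⟩
      · simp only [SetLike.val_smul, smul_eq_mul]
        linear_combination x' * hm.symm
      · rw [smul_smul, ← hm, mul_smul, he, map_smul]
    · obtain ⟨e₁, he₁⟩ := h₁
      obtain ⟨e₂, he₂⟩ := h₂
      refine ⟨e₁ + e₂, fun x => ?_⟩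
      obtain ⟨w₁, hw₁, hg₁⟩ := he₁ x
      obtain ⟨w₂, hw₂, hg₂⟩ := he₂ x
      exact ⟨w₁ + w₂, by rw [Submodule.coe_add, mul_add, mul_add, hw₁, hw₂],
        by rw [smul_add, map_add, hg₁, hg₂]⟩
  obtain ⟨e, he⟩ := key a (hJ ▸ Ideal.mem_span_singleton_self a)
  refine ⟨LinearMap.toSpanSingleton R Q e, fun x hx => ?_⟩
  obtain ⟨w, hw, hwe⟩ := he ⟨x, hx⟩
  obtain rfl : w = ⟨x, hx⟩ := Subtype.ext (mul_left_cancel₀ ha0 (hw.symm.trans (mul_comm _ _)))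
  exact hwe

section Bounded

variable {R T : Type*} [CommRing R] [AddCommGroup T] [Module R T] {𝔭 : Ideal R}

theorem exists_smul_notMem_of_le_torsionBySet (hT : ∀ n, ∃ a ∈ 𝔭 ^ n, ∃ t : T, a • t ≠ 0)
    {S : Submodule R T} {k : ℕ} (hS : S ≤ Submodule.torsionBySet R T ↑(𝔭 ^ k)) (n : ℕ) :
    ∃ t : T, ∃ b ∈ 𝔭 ^ n, b • t ∉ S := by
  by_contra! h
  obtain ⟨a, ha, t, hat⟩ := hT (k + n)
  refine hat (Submodule.mul_induction_on (C := (· • t = 0)) (pow_add 𝔭 k n ▸ ha)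
    (fun x hx y hy => ?_) fun x y hx hy => by rw [add_smul, hx, hy, add_zero])
  rw [mul_smul]
  exact (Submodule.mem_torsionBySet_iff _ _).1 (hS (h t y hy)) ⟨x, hx⟩

end Bounded

section Maximal

variable {R M E : Type*} [CommRing R] [AddCommGroup M] [Module R M] [AddCommGroup E] [Module R E]
  {𝔭 : Ideal R} [𝔭.IsMaximal]

theorem Submodule.mem_of_smul_mem_of_notMem {U : Submodule R M} {x : M} {k : ℕ}
    (hx : ∀ a ∈ 𝔭 ^ k, a • x = 0) {s : R} (hs : s ∉ 𝔭) (h : s • x ∈ U) : x ∈ U := by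
  obtain ⟨c, i, hi, hci⟩ := Ideal.IsMaximal.exists_inv ‹_› hs
  have hcop : IsCoprime 𝔭 (Ideal.span {s}) :=
    Ideal.isCoprime_iff_exists.2 ⟨i, hi, c * s,
      Ideal.mul_mem_left _ _ (Ideal.mem_span_singleton_self s), by rw [add_comm, hci]⟩
  obtain ⟨i, hi, j, hj, hij⟩ := (hcop.pow_left (m := k)).exists
  obtain ⟨d, rfl⟩ := Ideal.mem_span_singleton'.1 hj
  rw [← one_smul R x, ← hij, add_smul, hx i hi, zero_add, mul_smul]
  exact U.smul_mem d h

theorem exists_linearMap_apply_ne_zero (hE : Module.Baer R E) {c : E}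
    (hc0 : c ≠ 0) (hc : ∀ a ∈ 𝔭, a • c = 0) {m : M} (hm0 : m ≠ 0) {k : ℕ}
    (hm : ∀ a ∈ 𝔭 ^ k, a • m = 0) : ∃ h : M →ₗ[R] E, h m ≠ 0 := by
  have hle : Ideal.torsionOf R M m ≤ 𝔭 := fun a ha => by
    by_contra has
    exact hm0 (Submodule.mem_of_smul_mem_of_notMem (U := ⊥) hm has ha)
  let φ : (R ∙ m) →ₗ[R] E :=
    (Submodule.liftQ _ (LinearMap.toSpanSingleton R E c) fun a ha => hc a (hle ha)) ∘ₗ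
      (Ideal.quotTorsionOfEquivSpanSingleton R M m).symm.toLinearMap
  obtain ⟨h, hh⟩ := hE.extension_property _ (Submodule.injective_subtype _) φ
  have hφ : φ ⟨m, Submodule.mem_span_singleton_self m⟩ = c := by
    have : (Ideal.quotTorsionOfEquivSpanSingleton R M m).symm
        ⟨m, Submodule.mem_span_singleton_self m⟩ = Submodule.Quotient.mk 1 :=
      (LinearEquiv.symm_apply_eq _).2 ((one_smul R _).symm.trans
        (Ideal.quotTorsionOfEquivSpanSingleton_apply_mk m 1).symm)
    simp only [φ, LinearMap.comp_apply, LinearEquiv.coe_coe, this]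
    exact one_smul R c
  have hhm : h m = c := (LinearMap.congr_fun hh _).trans hφ
  exact ⟨h, hhm ▸ hc0⟩

variable {T : Type*} [AddCommGroup T] [Module R T]

theorem LinearPMap.exists_le_exists_smul_ne_zero (hE : Module.Baer R E) {c : E}
    (hc0 : c ≠ 0) (hc : ∀ a ∈ 𝔭, a • c = 0) (hprimary : ∀ t : T, ∃ k, ∀ a ∈ 𝔭 ^ k, a • t = 0)
    (hunbounded : ∀ n, ∃ a ∈ 𝔭 ^ n, ∃ t : T, a • t ≠ 0) (p : T →ₗ.[R] E) {k : ℕ}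
    (hp : p.domain ≤ Submodule.torsionBySet R T ↑(𝔭 ^ k)) (n : ℕ) :
    ∃ q : T →ₗ.[R] E, p ≤ q ∧ (∃ k', q.domain ≤ Submodule.torsionBySet R T ↑(𝔭 ^ k')) ∧
      ∃ x : q.domain, ∃ b ∈ 𝔭 ^ n, b • q x ≠ 0 := by
  obtain ⟨t, b, hb, hbt⟩ := exists_smul_notMem_of_le_torsionBySet hunbounded hp n
  obtain ⟨g, hg⟩ := hE.extension_property _ p.domain.injective_subtype p.toFun
  obtain ⟨j, hj⟩ := hprimary (b • t)
  obtain ⟨h, hh⟩ := exists_linearMap_apply_ne_zero hE hc0 hc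
    ((Submodule.Quotient.mk_eq_zero _).not.2 hbt)
    (fun a ha => by rw [← Submodule.Quotient.mk_smul, hj a ha, Submodule.Quotient.mk_zero])
  -- If `𝔭 ^ n` kills `g t`, adding `h` (which vanishes on `p.domain`) repairs this.
  obtain ⟨g', hg'p, b', hb', hg't⟩ :
      ∃ g' : T →ₗ[R] E, (∀ x : p.domain, g' x = p x) ∧ ∃ b' ∈ 𝔭 ^ n, b' • g' t ≠ 0 := by
    by_cases H : ∃ b' ∈ 𝔭 ^ n, b' • g t ≠ 0
    · exact ⟨g, fun x => LinearMap.congr_fun hg x, H⟩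
    · push Not at H
      refine ⟨g + h ∘ₗ p.domain.mkQ, fun x => ?_, b, hb, ?_⟩
      · rw [LinearMap.add_apply, LinearMap.comp_apply, Submodule.mkQ_apply,
          (Submodule.Quotient.mk_eq_zero _).2 x.2, h.map_zero, add_zero]
        exact LinearMap.congr_fun hg x
      · rwa [LinearMap.add_apply, smul_add, H b hb, zero_add, LinearMap.comp_apply,
          ← h.map_smul, Submodule.mkQ_apply, ← Submodule.Quotient.mk_smul]
  obtain ⟨j', hj'⟩ := hprimary t
  refine ⟨g'.toPMap (p.domain ⊔ R ∙ t), ⟨le_sup_left, fun x y hxy => ?_⟩, ⟨k + j', sup_le ?_ ?_⟩,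
    ⟨⟨t, Submodule.mem_sup_right (Submodule.mem_span_singleton_self t)⟩, b', hb', hg't⟩⟩
  · exact (hg'p x).symm.trans (congrArg g' hxy)
  · exact hp.trans (Submodule.torsionBySet_le_torsionBySet_of_subset
      (Ideal.pow_le_pow_right (Nat.le_add_right k j')))
  · exact (Submodule.span_singleton_le_iff_mem _ _).2 ((Submodule.mem_torsionBySet_iff _ _).2
      fun a => hj' a (Ideal.pow_le_pow_right (Nat.le_add_left j' k) a.2))

theorem exists_linearMap_forall_exists_smul_ne_zero (hE : Module.Baer R E) {c : E}
    (hc0 : c ≠ 0) (hc : ∀ a ∈ 𝔭, a • c = 0) (hprimary : ∀ t : T, ∃ k, ∀ a ∈ 𝔭 ^ k, a • t = 0)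
    (hunbounded : ∀ n, ∃ a ∈ 𝔭 ^ n, ∃ t : T, a • t ≠ 0) :
    ∃ f : T →ₗ[R] E, ∀ n, ∃ v ∈ LinearMap.range f, ∃ b ∈ 𝔭 ^ n, b • v ≠ 0 := by
  let Bounded := {p : T →ₗ.[R] E // ∃ k, p.domain ≤ Submodule.torsionBySet R T ↑(𝔭 ^ k)}
  have step (p : Bounded) (n : ℕ) :
      ∃ q : Bounded, p.1 ≤ q.1 ∧ ∃ x : q.1.domain, ∃ b ∈ 𝔭 ^ n, b • q.1 x ≠ 0 := by
    obtain ⟨p, k, hp⟩ := p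
    obtain ⟨q, hpq, hq, hqx⟩ :=
      LinearPMap.exists_le_exists_smul_ne_zero hE hc0 hc hprimary hunbounded p hp n
    exact ⟨⟨q, hq⟩, hpq, hqx⟩
  choose next hle hnext using step
  let seq : ℕ → Bounded := fun n => Nat.rec ⟨⊥, 0, bot_le⟩ (fun n p => next p n) n
  have hdir : DirectedOn (· ≤ ·) (Set.range fun n => (seq n).1) :=
    directedOn_range.2 (monotone_nat_of_le_succ fun n => hle (seq n) n).directed_le
  let p := LinearPMap.sSup _ hdir
  obtain ⟨f, hf⟩ := hE.extension_property _ p.domain.injective_subtype p.toFun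
  refine ⟨f, fun n => ?_⟩
  obtain ⟨x, b, hb, hbx⟩ := hnext (seq n) n
  refine ⟨f x, LinearMap.mem_range_self f x, b, hb, ?_⟩
  rwa [show f x = (seq (n + 1)).1 x from
    (LinearMap.congr_fun hf _).trans (LinearPMap.sSup_apply hdir ⟨n + 1, rfl⟩ x)]

end Maximal

/-- For a discrete valuation ring `A`, `K/A` is the injective hull of the residue field. -/
abbrev PrueferModule (A : Type*) [CommRing A] : Type _ :=
  FractionRing A ⧸ (Algebra.linearMap A (FractionRing A)).range

namespace PrueferModule

variable {R A : Type*} [CommRing A]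

theorem mk_eq_zero_iff {y : FractionRing A} :
    (Submodule.Quotient.mk y : PrueferModule A) = 0 ↔ IsLocalization.IsInteger A y := by
  rw [Submodule.Quotient.mk_eq_zero, LinearMap.mem_range]
  rfl

variable [CommRing R] [Algebra R A]

theorem smul_mk (r : R) (y : FractionRing A) :
    r • (Submodule.Quotient.mk y : PrueferModule A) =
      Submodule.Quotient.mk (algebraMap R (FractionRing A) r * y) := by
  rw [← Submodule.Quotient.mk_smul, Algebra.smul_def]

theorem exists_smul_eq [IsDomain A] (hA : Function.Injective (algebraMap R A)) {r : R}
    (hr : r ≠ 0) (d : PrueferModule A) : ∃ d', r • d' = d := by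
  obtain ⟨y, rfl⟩ := Submodule.Quotient.mk_surjective _ d
  have hinj : Function.Injective (algebraMap R (FractionRing A)) := by
    rw [IsScalarTower.algebraMap_eq R A]
    exact (IsFractionRing.injective A _).comp hA
  refine ⟨Submodule.Quotient.mk ((algebraMap R (FractionRing A) r)⁻¹ * y), ?_⟩
  rw [smul_mk, ← mul_assoc, mul_inv_cancel₀ ((map_ne_zero_iff _ hinj).2 hr), one_mul]

variable {𝔭 : Ideal R} [𝔭.IsPrime] [IsDomain A] [IsDiscreteValuationRing A]
  [IsLocalization.AtPrime A 𝔭]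

theorem exists_mul_pow_eq_algebraMap {ϖ : A} (hϖ : Irreducible ϖ) {a : R} {n : ℕ}
    (ha : a ∈ 𝔭 ^ n) : ∃ b : A, b * ϖ ^ n = algebraMap R A a := by
  have := Ideal.mem_map_of_mem (algebraMap R A) ha
  rw [Ideal.map_pow, IsLocalization.AtPrime.map_eq_maximalIdeal, hϖ.maximalIdeal_eq,
    Ideal.span_singleton_pow] at this
  exact Ideal.mem_span_singleton'.1 this

theorem exists_pow_smul_eq_zero (x : PrueferModule A) : ∃ k, ∀ a ∈ 𝔭 ^ k, a • x = 0 := by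
  obtain ⟨ϖ, hϖ⟩ := IsDiscreteValuationRing.exists_irreducible A
  obtain ⟨y, rfl⟩ := Submodule.Quotient.mk_surjective _ x
  obtain ⟨α, β, hβ, rfl⟩ := IsFractionRing.div_surjective A y
  obtain ⟨k, u, rfl⟩ :=
    IsDiscreteValuationRing.eq_unit_mul_pow_irreducible (nonZeroDivisors.ne_zero hβ) hϖ
  refine ⟨k, fun a ha => ?_⟩
  obtain ⟨b, hb⟩ := exists_mul_pow_eq_algebraMap hϖ ha
  rw [smul_mk, mk_eq_zero_iff, IsScalarTower.algebraMap_apply R A, ← hb]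
  refine ⟨b * α * ↑u⁻¹, ?_⟩
  have hϖ0 : algebraMap A (FractionRing A) ϖ ≠ 0 :=
    (map_ne_zero_iff _ (IsFractionRing.injective A _)).2 hϖ.ne_zero
  have hu : algebraMap A (FractionRing A) u ≠ 0 :=
    (map_ne_zero_iff _ (IsFractionRing.injective A _)).2 u.ne_zero
  simp only [map_mul, map_pow, map_units_inv]
  field_simp

theorem exists_ne_zero_forall_smul_eq_zero :
    ∃ c : PrueferModule A, c ≠ 0 ∧ ∀ a ∈ 𝔭, a • c = 0 := by
  obtain ⟨ϖ, hϖ⟩ := IsDiscreteValuationRing.exists_irreducible A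
  have hϖ0 : algebraMap A (FractionRing A) ϖ ≠ 0 :=
    (map_ne_zero_iff _ (IsFractionRing.injective A _)).2 hϖ.ne_zero
  refine ⟨Submodule.Quotient.mk (algebraMap A (FractionRing A) ϖ)⁻¹, fun h => ?_, fun a ha => ?_⟩
  · obtain ⟨b, hb⟩ := mk_eq_zero_iff.1 h
    refine hϖ.not_isUnit
      (IsUnit.of_mul_eq_one b (IsFractionRing.injective A (FractionRing A) ?_))
    rw [map_mul, hb, mul_inv_cancel₀ hϖ0, map_one]
  · obtain ⟨b, hb⟩ := exists_mul_pow_eq_algebraMap hϖ (pow_one 𝔭 ▸ ha)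
    rw [smul_mk, mk_eq_zero_iff, IsScalarTower.algebraMap_apply R A, ← hb, pow_one, map_mul,
      mul_assoc, mul_inv_cancel₀ hϖ0, mul_one]
    exact ⟨b, rfl⟩

theorem eq_top_of_forall_exists_smul_ne_zero [𝔭.IsMaximal] (U : Submodule R (PrueferModule A))
    (hU : ∀ n, ∃ u ∈ U, ∃ a ∈ 𝔭 ^ n, a • u ≠ 0) : U = ⊤ := by
  refine eq_top_iff.2 fun x _ => ?_
  obtain ⟨n, hn⟩ := exists_pow_smul_eq_zero (𝔭 := 𝔭) x
  obtain ⟨y, rfl⟩ := Submodule.Quotient.mk_surjective _ x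
  obtain ⟨u, hu, a, ha, hau⟩ := hU n
  obtain ⟨v, rfl⟩ := Submodule.Quotient.mk_surjective _ u
  have hay := hn a ha
  rw [smul_mk, mk_eq_zero_iff] at hay
  rw [smul_mk, ne_eq, mk_eq_zero_iff] at hau
  rcases eq_or_ne y 0 with rfl | hy
  · exact U.zero_mem
  have hv : v ≠ 0 := by
    rintro rfl
    exact hau ⟨0, by rw [map_zero, mul_zero]⟩
  -- `v / y ∈ A` is impossible, since it would put `a • v` in `A` together with `a • y`.
  rcases ValuationRing.isInteger_or_isInteger A (y / v) with ⟨z, hz⟩ | ⟨w, hw⟩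
  · obtain ⟨⟨r, s⟩, rfl⟩ := IsLocalization.mk'_surjective 𝔭.primeCompl z
    refine Submodule.mem_of_smul_mem_of_notMem hn s.2 ?_
    have hspec := congrArg (algebraMap A (FractionRing A)) (IsLocalization.mk'_spec A r s)
    rw [map_mul, hz, ← IsScalarTower.algebraMap_apply, ← IsScalarTower.algebraMap_apply] at hspec
    have hsr : (s : R) • (Submodule.Quotient.mk y : PrueferModule A) =
        r • Submodule.Quotient.mk v := by
      rw [smul_mk, smul_mk, ← hspec]
      field_simp
    rw [hsr]
    exact U.smul_mem r hu
  · obtain ⟨b, hb⟩ := hay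
    refine absurd ⟨w * b, ?_⟩ hau
    rw [map_mul, hw, hb, inv_div]
    field_simp

end PrueferModule

theorem exists_surjective_onto_divisible_of_unbounded_primary.{u}
    (R : Type u) [CommRing R] [IsDomain R] [IsDedekindDomain R]
    (𝔭 : Ideal R) (h𝔭 : 𝔭.IsPrime) (h𝔭0 : 𝔭 ≠ ⊥)
    (T : Type u) [AddCommGroup T] [Module R T]
    (hprimary : ∀ t : T, ∃ k : ℕ, ∀ a ∈ 𝔭 ^ k, a • t = 0)
    (hunbounded : ∀ n : ℕ, 1 ≤ n → ∃ a ∈ 𝔭 ^ n, ∃ t : T, a • t ≠ 0) :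
    ∃ (D : Type u) (_ : AddCommGroup D) (_ : Module R D) (f : T →ₗ[R] D),
      Function.Surjective f ∧ (∃ d : D, d ≠ 0) ∧
        (∀ r : R, r ≠ 0 → ∀ d : D, ∃ d' : D, r • d' = d) := by
  have := h𝔭.isMaximal h𝔭0
  have := IsLocalization.AtPrime.isDiscreteValuationRing_of_dedekind_domain R h𝔭0
    (Localization.AtPrime 𝔭)
  have hdiv (r : R) (hr : r ≠ 0) (d : PrueferModule (Localization.AtPrime 𝔭)) :
      ∃ d', r • d' = d :=
    PrueferModule.exists_smul_eq (IsLocalization.injective _ 𝔭.primeCompl_le_nonZeroDivisors) hr d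
  obtain ⟨c, hc0, hc⟩ := PrueferModule.exists_ne_zero_forall_smul_eq_zero
    (A := Localization.AtPrime 𝔭) (𝔭 := 𝔭)
  obtain ⟨f, hf⟩ := exists_linearMap_forall_exists_smul_ne_zero
    (Module.Baer.of_divisible_of_isDedekindDomain hdiv) hc0 hc hprimary fun n =>
      (hunbounded (n + 1) (Nat.le_add_left 1 n)).imp fun a ha =>
        ⟨Ideal.pow_le_pow_right n.le_succ ha.1, ha.2⟩
  exact ⟨_, inferInstance, inferInstance, f,
    LinearMap.range_eq_top.1 (PrueferModule.eq_top_of_forall_exists_smul_ne_zero _ hf),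
    ⟨c, hc0⟩, hdiv⟩
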